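/- arXiv:1102.2413 — 5 statements merged into one kernel-verified Lean document; each statement's English description precedes it below -/
import Mathlib

section
/- Let T be a full binary tree with N ≥ 2 leaves whose fringe thickness (maximal difference between depths of two leaves) is at most 2, and let m = ⌈log₂ N⌉. Then every leaf of T has depth between m-2 and m+1, and moreover T cannot simultaneously have a leaf at depth m-2 and a leaf at depth m+1. -/
/-- Full binary trees. -/
inductive FBT where
  | leaf : FBT
  | node : FBT → FBT → FBT

/-- The multiset of depths of the leaves of a full binary tree. -/
def FBT.leafDepths : FBT → Multiset ℕ
  | .leaf => {0}
  | .node l r => l.leafDepths.map (· + 1) + r.leafDepths.map (· + 1)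

/-!
Kraft's equality: the weights `2⁻ᵈ` of the leaf depths of a full binary tree sum to `1`.
If every depth is at most `k`, each weight is at least `2⁻ᵏ`, so `N ≤ 2ᵏ`; if every depth is
at least `k` and one exceeds it, `2ᵏ < N`. With fringe thickness `≤ 2`, a leaf at depth `d`
bounds all depths by `d + 2`, giving `m ≤ d + 2`; a leaf at depth `≥ m + 2` would put every
depth at `≥ m`, giving `2ᵐ < N ≤ 2ᵐ`. Finally, leaves at depths `m - 2` and `m + 1` can only
coexist when `m - 2` truncates to `0`, i.e. when the tree is a single leaf.
-/

namespace FBT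

theorem sum_inv_two_pow_leafDepths (T : FBT) :
    (T.leafDepths.map fun d => (2⁻¹ : ℚ) ^ d).sum = 1 := by
  induction T with
  | leaf => simp [leafDepths]
  | node l r ihl ihr =>
    simp only [leafDepths, Multiset.map_add, Multiset.sum_add, Multiset.map_map,
      Function.comp_def, pow_succ', Multiset.sum_map_mul_left, ihl, ihr]
    norm_num

theorem card_leafDepths_le_two_pow {T : FBT} {k : ℕ} (h : ∀ d ∈ T.leafDepths, d ≤ k) :
    Multiset.card T.leafDepths ≤ 2 ^ k := by
  have hweight : (Multiset.card T.leafDepths : ℚ) * 2⁻¹ ^ k ≤ 1 := by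
    calc (Multiset.card T.leafDepths : ℚ) * 2⁻¹ ^ k
        = (T.leafDepths.map fun _ => (2⁻¹ : ℚ) ^ k).sum := by simp
      _ ≤ (T.leafDepths.map fun d => (2⁻¹ : ℚ) ^ d).sum :=
        Multiset.sum_map_le_sum_map _ _ fun d hd =>
          pow_le_pow_of_le_one (by norm_num) (by norm_num) (h d hd)
      _ = 1 := T.sum_inv_two_pow_leafDepths
  rw [inv_pow, ← div_eq_mul_inv, div_le_one (by positivity)] at hweight
  exact_mod_cast hweight

theorem two_pow_lt_card_leafDepths {T : FBT} {k : ℕ} (h : ∀ d ∈ T.leafDepths, k ≤ d)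
    (hlt : ∃ d ∈ T.leafDepths, k < d) : 2 ^ k < Multiset.card T.leafDepths := by
  have hweight : 1 < (Multiset.card T.leafDepths : ℚ) * 2⁻¹ ^ k := by
    calc (1 : ℚ) = (T.leafDepths.map fun d => (2⁻¹ : ℚ) ^ d).sum :=
          T.sum_inv_two_pow_leafDepths.symm
      _ < (T.leafDepths.map fun _ => (2⁻¹ : ℚ) ^ k).sum :=
        Multiset.sum_lt_sum
          (fun d hd => pow_le_pow_of_le_one (by norm_num) (by norm_num) (h d hd))
          (hlt.imp fun d ⟨hd, hkd⟩ => ⟨hd, pow_lt_pow_right_of_lt_one₀ (by norm_num)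
            (by norm_num) hkd⟩)
      _ = (Multiset.card T.leafDepths : ℚ) * 2⁻¹ ^ k := by simp
  rw [inv_pow, ← div_eq_mul_inv, one_lt_div (by positivity)] at hweight
  exact_mod_cast hweight

theorem eq_leaf_of_zero_mem_leafDepths {T : FBT} (h : 0 ∈ T.leafDepths) : T = leaf := by
  cases T with
  | leaf => rfl
  | node l r => simp [leafDepths] at h

end FBT

/-- If `T` is a full binary tree with `N ≥ 2` leaves and fringe thickness at most 2,
and `m = ⌈log₂ N⌉`, then every leaf depth lies in `[m-2, m+1]`, and `T` cannot have
both a leaf at depth `m-2` and a leaf at depth `m+1`. -/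
theorem stmt_4 (T : FBT) (N : ℕ) (hN : N = Multiset.card T.leafDepths) (hN2 : 2 ≤ N)
    (hfringe : ∀ d₁ ∈ T.leafDepths, ∀ d₂ ∈ T.leafDepths, d₁ ≤ d₂ + 2)
    (m : ℕ) (hm : m = Nat.clog 2 N) :
    (∀ d ∈ T.leafDepths, m - 2 ≤ d ∧ d ≤ m + 1) ∧
    ¬((m - 2) ∈ T.leafDepths ∧ (m + 1) ∈ T.leafDepths) := by
  have hN_le : N ≤ 2 ^ m := hm ▸ Nat.le_pow_clog one_lt_two N
  have depth_bounds : ∀ d ∈ T.leafDepths, m - 2 ≤ d ∧ d ≤ m + 1 := by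
    intro d₀ hd₀
    constructor
    · have : m ≤ d₀ + 2 := hm ▸ (Nat.clog_le_iff_le_pow one_lt_two).2
        (hN ▸ FBT.card_leafDepths_le_two_pow fun d hd => hfringe d hd d₀ hd₀)
      omega
    · by_contra! hdeep
      have : 2 ^ m < N := hN ▸ FBT.two_pow_lt_card_leafDepths
        (fun d hd => by have := hfringe d₀ hd₀ d hd; omega) ⟨d₀, hd₀, by omega⟩
      omega
  refine ⟨depth_bounds, fun ⟨hshallow, hdeep⟩ => ?_⟩
  have := hfringe _ hdeep _ hshallow
  rw [show m - 2 = 0 by omega] at hshallow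
  rw [hN, FBT.eq_leaf_of_zero_mem_leafDepths hshallow] at hN2
  simp [FBT.leafDepths] at hN2
end

section
/- Let p_1 ≥ p_2 ≥ ... ≥ p_N be a 4-uniform probability vector (p_1 ≤ 4 p_N). For the family of trees T_{σ,c} with profile (n_{M-1}, n_M, n_{M+1}) = (2^M - N + c, 2N - 2^M - 3c, 2c), define D_{σ,c} = p_{N-2c+1} + p_{N-2c+2} - p_{2^M - N + c} for c in the admissible range. Then for fixed σ and admissible c' ≤ c, D_{σ,c'} ≤ D_{σ,c}; in particular the sign of D_{σ,c} is non-decreasing in c. -/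
/-- Let `p_1 ≥ ⋯ ≥ p_N` be a 4-uniform probability vector. For `σ ∈ {0,1}`,
`M = ⌈log₂ N⌉ - σ`, and `c` in the admissible range `(N-2^M)σ < c`, `3c ≤ 2N - 2^M`,
the quantity `D_{σ,c} = p_{N-2c+1} + p_{N-2c+2} - p_{2^M-N+c}` is non-decreasing in `c`:
for admissible `c' ≤ c`, `D_{σ,c'} ≤ D_{σ,c}` (hence so is its sign). -/
theorem stmt_6 (N : ℕ) (hN : 2 ≤ N) (p : ℕ → ℝ)
    (hmono : ∀ i j, 1 ≤ i → i ≤ j → j ≤ N → p j ≤ p i)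
    (hpos : 0 < p N) (h4 : p 1 ≤ 4 * p N)
    (σ : ℕ) (hσ : σ = 0 ∨ σ = 1)
    (M : ℕ) (hM : M = Nat.clog 2 N - σ)
    (c c' : ℕ)
    (hc'lo : ((N : ℤ) - 2 ^ M) * σ < c') (hc'c : c' ≤ c)
    (hchi : 3 * (c : ℤ) ≤ 2 * N - 2 ^ M) :
    p (N - 2 * c' + 1) + p (N - 2 * c' + 2) - p (2 ^ M + c' - N)
      ≤ p (N - 2 * c + 1) + p (N - 2 * c + 2) - p (2 ^ M + c - N) := by
  obtain ⟨K, hK⟩ : ∃ K, (2:ℕ) ^ M = K := ⟨_, rfl⟩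
  rw [show ((2:ℤ) ^ M) = (K : ℤ) by rw [← hK]; push_cast; ring] at hchi hc'lo
  rw [hK]
  have hchiN : 3 * c + K ≤ 2 * N := by omega
  have hc'1 : 1 ≤ c' := by
    rcases hσ with h | h
    · rw [h] at hc'lo
      have : (0:ℤ) < (c' : ℤ) := by simpa using hc'lo
      omega
    · rw [h] at hc'lo
      push_cast at hc'lo
      have hKN : K < N := by
        rw [← hK, hM, h]
        exact Nat.pow_pred_clog_lt_self one_lt_two (by omega)
      omega
  have hKc' : N < K + c' := by
    rcases hσ with h | h
    · have hle : N ≤ K := by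
        rw [← hK, hM, h, Nat.sub_zero]; exact Nat.le_pow_clog one_lt_two N
      omega
    · rw [h] at hc'lo; push_cast at hc'lo; omega
  have h2K : N ≤ 2 * K := by
    rcases hσ with h | h
    · have hle : N ≤ K := by
        rw [← hK, hM, h, Nat.sub_zero]; exact Nat.le_pow_clog one_lt_two N
      omega
    · have h1 : N ≤ 2 ^ Nat.clog 2 N := Nat.le_pow_clog one_lt_two N
      have h2 : 1 ≤ Nat.clog 2 N := by
        rw [Nat.one_le_iff_ne_zero]
        intro h0
        have := Nat.le_pow_clog one_lt_two N
        rw [h0] at this; omega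
      have : 2 ^ Nat.clog 2 N = 2 * K := by
        rw [← hK, hM, h]
        conv_lhs => rw [show Nat.clog 2 N = (Nat.clog 2 N - 1) + 1 from (Nat.succ_pred_eq_of_pos h2).symm]
        rw [pow_succ]; ring
      omega
  have h2c : 2 * c ≤ N := by omega
  have A := hmono (N - 2 * c + 1) (N - 2 * c' + 1) (by omega) (by omega) (by omega)
  have B := hmono (N - 2 * c + 2) (N - 2 * c' + 2) (by omega) (by omega) (by omega)
  have C := hmono (K + c' - N) (K + c - N) (by omega) (by omega) (by omega)
  linarith
end

section
/- Let k > 2, Q = k² - ⌈k(k-1)/4⌉, M = ⌈log₂ Q⌉, and Δ(x) = 2k² - 2^{M+1} + x(x+1) - (k-x-2)(k-x-1)/2. Then Δ(-1) ≤ 0 and Δ(k) > 0; consequently the largest real root x₀ of Δ satisfies -1 ≤ x₀ < k. -/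
lemma odd_dvd_pow_two {a i : ℕ} (ha : a % 2 = 1) (h : a ∣ 2 ^ i) : a = 1 := by
  obtain ⟨j, _, he⟩ := (Nat.dvd_prime_pow Nat.prime_two).mp h
  cases j with
  | zero => simpa using he
  | succ n =>
    have h2 : 2 ^ (n + 1) = 2 * 2 ^ n := by ring
    omega

lemma key_bounds (k Q M : ℕ) (hk : 2 < k)
    (hQ : Q = k ^ 2 - (k * (k - 1) + 3) / 4)
    (hM : M = Nat.clog 2 Q) :
    6 * k ^ 2 + 2 * k ≤ 8 * 2 ^ M ∧ 2 * 2 ^ M + 2 ≤ 3 * k ^ 2 + k := by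
  obtain ⟨m, hm⟩ : ∃ m, k = 4*m+1 ∨ k = 4*m+2 ∨ k = 4*m+3 ∨ k = 4*m+4 :=
    ⟨(k-1)/4, by omega⟩
  obtain ⟨s, hs⟩ : ∃ s, s = m * m := ⟨_, rfl⟩
  rcases hm with hm | hm | hm | hm
  · -- k = 4m+1, good case
    have hk1 : k - 1 = 4*m := by omega
    have ha : k * (k-1) = 16*s + 4*m := by rw [hk1, hm, hs]; ring
    have hc : (k*(k-1)+3)/4 = 4*s + m := by rw [ha]; omega
    have hk2 : k^2 = 16*s + 8*m + 1 := by rw [hm, hs]; ring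
    have hQv : Q = 12*s + 7*m + 1 := by rw [hQ, hk2, hc]; omega
    have hQ2 : 2 ≤ Q := by omega
    have hle : Q ≤ 2^M := hM ▸ Nat.le_pow_clog one_lt_two Q
    have hMpos : 0 < M := hM ▸ Nat.clog_pos one_lt_two hQ2
    have hlt : 2^(M-1) < Q := by
      rw [hM, ← Nat.pred_eq_sub_one]; exact Nat.pow_pred_clog_lt_self one_lt_two hQ2
    have hdouble : 2^(M-1) * 2 = 2^M := by rw [← pow_succ]; congr 1; omega
    refine ⟨?_, ?_⟩ <;> rw [hk2] <;> omega
  · -- k = 4m+2, bad case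
    have hk1 : k - 1 = 4*m+1 := by omega
    have ha : k * (k-1) = 16*s + 12*m + 2 := by rw [hk1, hm, hs]; ring
    have hc : (k*(k-1)+3)/4 = 4*s + 3*m + 1 := by rw [ha]; omega
    have hk2 : k^2 = 16*s + 16*m + 4 := by rw [hm, hs]; ring
    have hQv : Q = 12*s + 13*m + 3 := by rw [hQ, hk2, hc]; omega
    have hfac : Q = (4*m+3) * (3*m+1) := by rw [hQv, hs]; ring
    have hQ2 : 2 ≤ Q := by omega
    have hle : Q ≤ 2^M := hM ▸ Nat.le_pow_clog one_lt_two Q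
    have hMpos : 0 < M := hM ▸ Nat.clog_pos one_lt_two hQ2
    have hlt : 2^(M-1) < Q := by
      rw [hM, ← Nat.pred_eq_sub_one]; exact Nat.pow_pred_clog_lt_self one_lt_two hQ2
    have hdouble : 2^(M-1) * 2 = 2^M := by rw [← pow_succ]; congr 1; omega
    have hne : Q ≠ 2^M := by
      intro he
      have hd : (4*m+3) ∣ 2^M := ⟨3*m+1, by rw [← he, hfac]⟩
      have := odd_dvd_pow_two (by omega) hd
      omega
    refine ⟨?_, ?_⟩ <;> rw [hk2] <;> omega
  · -- k = 4m+3, bad case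
    have hk1 : k - 1 = 4*m+2 := by omega
    have ha : k * (k-1) = 16*s + 20*m + 6 := by rw [hk1, hm, hs]; ring
    have hc : (k*(k-1)+3)/4 = 4*s + 5*m + 2 := by rw [ha]; omega
    have hk2 : k^2 = 16*s + 24*m + 9 := by rw [hm, hs]; ring
    have hQv : Q = 12*s + 19*m + 7 := by rw [hQ, hk2, hc]; omega
    have hfac : Q = (12*m+7) * (m+1) := by rw [hQv, hs]; ring
    have hQ2 : 2 ≤ Q := by omega
    have hle : Q ≤ 2^M := hM ▸ Nat.le_pow_clog one_lt_two Q
    have hMpos : 0 < M := hM ▸ Nat.clog_pos one_lt_two hQ2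
    have hlt : 2^(M-1) < Q := by
      rw [hM, ← Nat.pred_eq_sub_one]; exact Nat.pow_pred_clog_lt_self one_lt_two hQ2
    have hdouble : 2^(M-1) * 2 = 2^M := by rw [← pow_succ]; congr 1; omega
    have hne : Q ≠ 2^M := by
      intro he
      have hd : (12*m+7) ∣ 2^M := ⟨m+1, by rw [← he, hfac]⟩
      have := odd_dvd_pow_two (by omega) hd
      omega
    refine ⟨?_, ?_⟩ <;> rw [hk2] <;> omega
  · -- k = 4m+4, good case
    have hk1 : k - 1 = 4*m+3 := by omega
    have ha : k * (k-1) = 16*s + 28*m + 12 := by rw [hk1, hm, hs]; ring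
    have hc : (k*(k-1)+3)/4 = 4*s + 7*m + 3 := by rw [ha]; omega
    have hk2 : k^2 = 16*s + 32*m + 16 := by rw [hm, hs]; ring
    have hQv : Q = 12*s + 25*m + 13 := by rw [hQ, hk2, hc]; omega
    have hQ2 : 2 ≤ Q := by omega
    have hle : Q ≤ 2^M := hM ▸ Nat.le_pow_clog one_lt_two Q
    have hMpos : 0 < M := hM ▸ Nat.clog_pos one_lt_two hQ2
    have hlt : 2^(M-1) < Q := by
      rw [hM, ← Nat.pred_eq_sub_one]; exact Nat.pow_pred_clog_lt_self one_lt_two hQ2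
    have hdouble : 2^(M-1) * 2 = 2^M := by rw [← pow_succ]; congr 1; omega
    refine ⟨?_, ?_⟩ <;> rw [hk2] <;> omega

/-- For `k > 2`, `Q = k² - ⌈k(k-1)/4⌉`, `M = ⌈log₂ Q⌉`, and
`Δ(x) = 2k² - 2^{M+1} + x(x+1) - (k-x-2)(k-x-1)/2`: `Δ(-1) ≤ 0` and `Δ(k) > 0`;
consequently the largest real root `x₀` of `Δ` satisfies `-1 ≤ x₀ < k`. -/
theorem stmt_10 (k : ℕ) (hk : 2 < k) (Q M : ℕ)
    (hQ : Q = k ^ 2 - (k * (k - 1) + 3) / 4)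
    (hM : M = Nat.clog 2 Q)
    (Δ : ℝ → ℝ)
    (hΔ : ∀ x, Δ x = 2 * (k : ℝ) ^ 2 - 2 ^ (M + 1) + x * (x + 1) -
      ((k : ℝ) - x - 2) * ((k : ℝ) - x - 1) / 2) :
    Δ (-1) ≤ 0 ∧ 0 < Δ (k : ℝ) ∧
    ∀ x₀ : ℝ, (Δ x₀ = 0 ∧ ∀ y, Δ y = 0 → y ≤ x₀) → -1 ≤ x₀ ∧ x₀ < (k : ℝ) := by
  obtain ⟨h1, h2⟩ := key_bounds k Q M hk hQ hM
  have hk3 : (3:ℝ) ≤ (k:ℝ) := by exact_mod_cast hk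
  have h1' : 6 * (k:ℝ)^2 + 2 * k ≤ 8 * 2^M := by exact_mod_cast h1
  have h2' : 2 * (2:ℝ)^M + 2 ≤ 3 * (k:ℝ)^2 + k := by exact_mod_cast h2
  have hps : (2:ℝ)^(M+1) = 2 * 2^M := by ring
  have hneg : Δ (-1) ≤ 0 := by rw [hΔ]; nlinarith [h1', hps]
  have hpos : 0 < Δ (k:ℝ) := by rw [hΔ]; nlinarith [h2', hps]
  refine ⟨hneg, hpos, ?_⟩
  rintro x₀ ⟨hroot, hmax⟩
  have hcont : Continuous Δ := by
    have : Δ = fun x => 2 * (k : ℝ) ^ 2 - 2 ^ (M + 1) + x * (x + 1) -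
      ((k : ℝ) - x - 2) * ((k : ℝ) - x - 1) / 2 := funext hΔ
    rw [this]; fun_prop
  constructor
  · have hsub : Set.Icc (Δ (-1)) (Δ (k:ℝ)) ⊆ Δ '' Set.Icc (-1) (k:ℝ) :=
      intermediate_value_Icc (by linarith) hcont.continuousOn
    obtain ⟨c, hc, hΔc⟩ := hsub ⟨hneg, hpos.le⟩
    exact le_trans hc.1 (hmax c hΔc)
  · by_contra h
    push_neg at h
    have key : Δ x₀ - Δ (k:ℝ) = (x₀ - k) * (x₀ + 3*k - 1) / 2 := by
      rw [hΔ, hΔ]; ring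
    nlinarith [mul_nonneg (sub_nonneg.2 h) (show (0:ℝ) ≤ x₀ + 3*k - 1 by linarith)]
end

section
/- Let k ≥ 2 and q = 2^{-k}. Write a signature s ≥ 2^{k-1}-1 as s = 2^{k-1} - 1 + (2^k - 1)ℓ + j with ℓ ≥ 0 and 0 ≤ j < 2^k - 1. Then the scaled weight of all signatures strictly greater than s equals W_s = (2q(1+j)+1)/(2(1-q)) + q²/(1-q)² + ℓ. -/
/-- For `k ≥ 2`, `q = 2^{-k}`, and a signature `s = 2^{k-1} - 1 + (2^k - 1)ℓ + j` with
`ℓ ≥ 0`, `0 ≤ j < 2^k - 1`, the scaled weight of all signatures greater than `s`,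
`W_s = q^{-s} ∑_{r ≥ 0} (s+2+r) q^{s+1+r} = ∑_{r ≥ 0} (s+2+r) q^{r+1}`, equals
`(2q(1+j)+1)/(2(1-q)) + q²/(1-q)² + ℓ`. -/
theorem stmt_14 (k : ℕ) (hk : 2 ≤ k) (q : ℝ) (hq : q = (2 : ℝ) ^ (-(k : ℤ)))
    (ℓ j s : ℕ) (hj : j < 2 ^ k - 1)
    (hs : s = 2 ^ (k - 1) - 1 + (2 ^ k - 1) * ℓ + j) :
    (∑' r : ℕ, ((s : ℝ) + 2 + (r : ℝ)) * q ^ (r + 1))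
      = (2 * q * (1 + (j : ℝ)) + 1) / (2 * (1 - q)) + q ^ 2 / (1 - q) ^ 2 + (ℓ : ℝ) := by
  have hq0 : 0 < q := by rw [hq]; positivity
  have hq1 : q < 1 := by
    rw [hq]
    calc (2:ℝ) ^ (-(k:ℤ)) < 2 ^ (0:ℤ) := by
          apply zpow_lt_zpow_right₀ (by norm_num)
          omega
      _ = 1 := by norm_num
  have hqnorm : ‖q‖ < 1 := by rw [Real.norm_eq_abs, abs_of_pos hq0]; exact hq1
  have hne : (1:ℝ) - q ≠ 0 := by linarith
  -- key identities
  have hqk : q * 2 ^ k = 1 := by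
    rw [hq, zpow_neg, zpow_natCast]
    field_simp
  have hk1 : (2:ℝ) ^ (k-1) * 2 = 2 ^ k := by
    rw [← pow_succ]
    congr 1
    omega
  -- cast of s
  have hscast : (s:ℝ) = 2 ^ (k-1) - 1 + (2 ^ k - 1) * ℓ + j := by
    have h1 : (1:ℕ) ≤ 2 ^ (k-1) := Nat.one_le_two_pow
    have h2 : (1:ℕ) ≤ 2 ^ k := Nat.one_le_two_pow
    rw [hs]
    push_cast [Nat.cast_sub h1, Nat.cast_sub h2]
    ring
  -- split the sum
  have hsum1 : Summable fun r : ℕ => ((s:ℝ) + 2) * q * q ^ r :=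
    (summable_geometric_of_lt_one hq0.le hq1).mul_left _
  have hsum2 : Summable fun r : ℕ => q * ((r:ℝ) * q ^ r) :=
    (summable_norm_pow_mul_geometric_of_norm_lt_one 1 hqnorm).of_norm.congr
      (by intro r; push_cast; ring) |>.mul_left q
  have heq : (∑' r : ℕ, ((s : ℝ) + 2 + (r : ℝ)) * q ^ (r + 1))
      = (∑' r : ℕ, ((s:ℝ) + 2) * q * q ^ r) + ∑' r : ℕ, q * ((r:ℝ) * q ^ r) := by
    rw [← Summable.tsum_add hsum1 hsum2]
    congr 1; funext r; ring
  rw [heq, tsum_mul_left, tsum_mul_left, tsum_geometric_of_lt_one hq0.le hq1,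
    tsum_coe_mul_geometric_of_norm_lt_one hqnorm, hscast]
  have h2k : (2:ℝ)^k = 1/q := by field_simp [hqk]; linarith [hqk]
  have hk1' : (2:ℝ)^(k-1) = 1/(2*q) := by
    rw [← hk1] at h2k
    field_simp at h2k ⊢
    linarith
  rw [h2k, hk1']
  field_simp
  ring
end

section
/- For 0 < q < 1, the average code length of the limit code C_∞ under the two-dimensional geometric distribution with parameter q equals 1 + (1/(1-q)) \sum_{t\ge 0} q^{2^t} (2^t (1-q) + 2). -/
/-!
Since `2^t ≤ s + 1 < 2^(t+1)`, the weight `D(t,s)` splits as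
`D(t,s) = (s + 1) + (s + 2) ∑_{u ≥ 0} (s + 1 ∸ 2^u)`, the terms with `u > t` being zero.
The first part contributes `(1-q)² ∑_s (s+1) q^s = 1`. In the second, exchanging the
(nonnegative) double sum, the row of a fixed `u` runs over `s = 2^u - 1 + k` and equals
`q^(2^u - 1) ∑_k k (k + 1 + 2^u) q^k = q^(2^u) (2^u (1-q) + 2) / (1-q)³`.
-/

open Finset

section Geometric

variable {𝕜 : Type*} [NormedField 𝕜] {r : 𝕜}

lemma hasSum_add_one_mul_add_two_mul_geometric (hr : ‖r‖ < 1) :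
    HasSum (fun n : ℕ => ((n : 𝕜) + 1) * (n + 2) * r ^ n) (2 / (1 - r) ^ 3) := by
  convert! (hasSum_choose_mul_geometric_of_norm_lt_one 2 hr).mul_left 2 using 1
  · ext n
    have h : (n + 1 + 1) * (n + 1) = (n + 2).choose 2 * 2 := by
      simpa using Nat.add_one_mul_choose_eq (n + 1) 1
    have h' := congrArg (Nat.cast (R := 𝕜)) h
    push_cast at h'
    linear_combination r ^ n * h'
  · ring

lemma hasSum_mul_add_one_add_mul_geometric (a : 𝕜) (hr : ‖r‖ < 1) :
    HasSum (fun n : ℕ => (n : 𝕜) * (n + 1 + a) * r ^ n)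
      (r * (a * (1 - r) + 2) / (1 - r) ^ 3) := by
  have hr1 : 1 - r ≠ 0 := sub_ne_zero.2 (by rintro rfl; simp at hr)
  have h1 : HasSum (fun n : ℕ => ((n : 𝕜) + 1) * r ^ n) (1 / (1 - r) ^ 2) := by
    simpa using hasSum_choose_mul_geometric_of_norm_lt_one 1 hr
  convert! ((hasSum_add_one_mul_add_two_mul_geometric hr).sub (h1.mul_left (2 - a))).sub
    ((hasSum_geometric_of_norm_lt_one hr).mul_left a) using 1
  · ext n
    ring
  · field_simp
    ring

lemma hasSum_pow_mul_add_two_mul_tsub_two_pow (u : ℕ) (hr : ‖r‖ < 1) :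
    HasSum (fun s : ℕ => r ^ s * ((s : 𝕜) + 2) * ((s + 1 - 2 ^ u : ℕ) : 𝕜))
      (r ^ 2 ^ u * (2 ^ u * (1 - r) + 2) / (1 - r) ^ 3) := by
  have hu : 1 ≤ 2 ^ u := Nat.one_le_two_pow
  rw [← hasSum_nat_add_iff' (2 ^ u - 1)]
  have hvanish :
      ∑ s ∈ range (2 ^ u - 1), r ^ s * ((s : 𝕜) + 2) * ((s + 1 - 2 ^ u : ℕ) : 𝕜) = 0 :=
    sum_eq_zero fun s hs => by
      rw [mem_range] at hs
      rw [Nat.sub_eq_zero_of_le (by omega), Nat.cast_zero, mul_zero]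
  convert! (hasSum_mul_add_one_add_mul_geometric (2 ^ u) hr).mul_left (r ^ (2 ^ u - 1)) using 1
  · ext k
    rw [show k + (2 ^ u - 1) + 1 - 2 ^ u = k by omega, Nat.cast_add, Nat.cast_sub hu, pow_add]
    push_cast
    ring
  · rw [hvanish, sub_zero, ← mul_div_assoc, ← mul_assoc, ← pow_succ, Nat.sub_add_cancel hu]

end Geometric

lemma tsum_cast_tsub_two_pow {n : ℕ} (hn : n ≠ 0) :
    ∑' u : ℕ, ((n - 2 ^ u : ℕ) : ℝ) = (Nat.log 2 n + 1) * n - (2 * 2 ^ Nat.log 2 n - 1) := by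
  set L := Nat.log 2 n
  rw [tsum_eq_sum (s := range (L + 1)) fun u hu => by
    rw [mem_range, not_lt] at hu
    have hlt :=
      (Nat.lt_pow_succ_log_self one_lt_two n).trans_le (Nat.pow_le_pow_right two_pos hu)
    rw [Nat.sub_eq_zero_of_le hlt.le, Nat.cast_zero]]
  have hle : ∀ u ∈ range (L + 1), 2 ^ u ≤ n := fun u hu =>
    (Nat.pow_le_pow_right two_pos (Nat.lt_succ_iff.1 (mem_range.1 hu))).trans
      (Nat.pow_log_le_self 2 hn)
  rw [sum_congr rfl fun u hu => Nat.cast_sub (hle u hu), sum_sub_distrib, sum_const,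
    card_range, nsmul_eq_mul]
  push_cast
  rw [geom_sum_eq (by norm_num : (2 : ℝ) ≠ 1), pow_succ]
  ring

lemma hasSum_pow_mul_add_two_mul_tsum_tsub_two_pow {q : ℝ} (hq : 0 ≤ q) (hq1 : q < 1) :
    HasSum (fun s : ℕ => q ^ s * ((s : ℝ) + 2) * ∑' u : ℕ, ((s + 1 - 2 ^ u : ℕ) : ℝ))
      (∑' u : ℕ, q ^ 2 ^ u * (2 ^ u * (1 - q) + 2) / (1 - q) ^ 3) := by
  have hnorm : ‖q‖ < 1 := by rwa [Real.norm_of_nonneg hq]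
  set f : ℕ → ℕ → ℝ := fun u s => q ^ s * ((s : ℝ) + 2) * ((s + 1 - 2 ^ u : ℕ) : ℝ)
  have hrow : ∀ u, HasSum (f u) (q ^ 2 ^ u * (2 ^ u * (1 - q) + 2) / (1 - q) ^ 3) :=
    fun u => hasSum_pow_mul_add_two_mul_tsub_two_pow u hnorm
  have hcomp : ∀ {g : ℕ → ℝ}, Summable g → Summable fun u => g (2 ^ u) :=
    fun hg => hg.comp_injective (Nat.pow_right_injective le_rfl)
  have hrows : Summable fun u => q ^ 2 ^ u * (2 ^ u * (1 - q) + 2) / (1 - q) ^ 3 := by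
    have hlin := hcomp (hasSum_coe_mul_geometric_of_norm_lt_one hnorm).summable
    have hgeom := hcomp (summable_geometric_of_lt_one hq hq1)
    refine (((hlin.mul_left (1 - q)).add (hgeom.mul_left 2)).div_const ((1 - q) ^ 3)).congr
      fun u => ?_
    push_cast
    ring
  have hf_nonneg : 0 ≤ Function.uncurry f := fun _ => by
    simp only [Function.uncurry, f]
    positivity
  have hf : Summable (Function.uncurry f) := (summable_prod_of_nonneg hf_nonneg).2
    ⟨fun u => (hrow u).summable, hrows.congr fun u => (hrow u).tsum_eq.symm⟩
  have hcols : Summable fun s => ∑' u, f u s :=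
    ((summable_prod_of_nonneg fun p => hf_nonneg p.swap).1 hf.prod_symm).2
  simp_rw [← tsum_mul_left] at hcols ⊢
  rw [← tsum_congr fun u => (hrow u).tsum_eq,
    ← hf.tsum_comm' (fun u => (hrow u).summable) fun s => hf.prod_symm.prod_factor s]
  exact hcols.hasSum

/-- The average code length of the limit code `C_∞` under `TDGD(q)`.  Writing
`s = 2^t - 1 + r` with `t = ⌊log₂(s+1)⌋` and `r = s + 1 - 2^t`, the contribution of
signature `s` is `q^s D(t,s)` with `D(t,s) = ((t-1)(s+2)+2r+2)(s+1)+2r+1`, and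
`(1-q)² ∑_s q^s D(t,s) = 1 + (1/(1-q)) ∑_{t ≥ 0} q^{2^t}(2^t(1-q)+2)`. -/
theorem stmt_15 (q : ℝ) (hq : 0 < q) (hq1 : q < 1) :
    (∑' s : ℕ,
      (1 - q) ^ 2 * q ^ s *
        (((((Nat.log 2 (s + 1) : ℝ)) - 1) * ((s : ℝ) + 2) +
            2 * ((s + 1 - 2 ^ Nat.log 2 (s + 1) : ℕ) : ℝ) + 2) * ((s : ℝ) + 1) +
          2 * ((s + 1 - 2 ^ Nat.log 2 (s + 1) : ℕ) : ℝ) + 1))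
      = 1 + (1 / (1 - q)) * ∑' t : ℕ, q ^ (2 ^ t) * ((2 : ℝ) ^ t * (1 - q) + 2) := by
  have hq1' : 1 - q ≠ 0 := sub_ne_zero.2 hq1.ne'
  have hlinear : HasSum (fun s : ℕ => ((s : ℝ) + 1) * q ^ s) (1 / (1 - q) ^ 2) := by
    simpa using hasSum_choose_mul_geometric_of_norm_lt_one 1
      (by rwa [Real.norm_of_nonneg hq.le] : ‖q‖ < 1)
  have hsplit : ∀ s : ℕ,
      (1 - q) ^ 2 * q ^ s *
        (((((Nat.log 2 (s + 1) : ℝ)) - 1) * ((s : ℝ) + 2) +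
            2 * ((s + 1 - 2 ^ Nat.log 2 (s + 1) : ℕ) : ℝ) + 2) * ((s : ℝ) + 1) +
          2 * ((s + 1 - 2 ^ Nat.log 2 (s + 1) : ℕ) : ℝ) + 1)
      = (1 - q) ^ 2 * (((s : ℝ) + 1) * q ^ s +
          q ^ s * ((s : ℝ) + 2) * ∑' u : ℕ, ((s + 1 - 2 ^ u : ℕ) : ℝ)) := fun s => by
    rw [tsum_cast_tsub_two_pow s.succ_ne_zero,
      Nat.cast_sub (Nat.pow_log_le_self 2 s.succ_ne_zero)]
    push_cast
    ring
  rw [tsum_congr hsplit, ((hlinear.add (hasSum_pow_mul_add_two_mul_tsum_tsub_two_pow hq.le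
    hq1)).mul_left _).tsum_eq, tsum_div_const]
  field_simp
end
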